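/- Let μ and π be Borel probability measures on ℝ^m with finite second moments, and suppose: (i) D_TV(μ, π) ≤ K·ρ^h for constants K > 0, ρ ∈ (0, 1), and a real number h ≥ 0; (ii) both measures satisfy the sub-Gaussian tail bound μ({x : ‖x‖₂² > s}) ≤ C·e^{−c s} and π({x : ‖x‖₂² > s}) ≤ C·e^{−c s} for all s > 0, with constants C, c > 0. Then the second-moment matrices M(μ) = ∫ x xᵀ dμ and M(π) = ∫ x xᵀ dπ satisfy ‖M(μ) − M(π)‖₂ ≤ 2K·ρ^{h/3} + 2C·(ρ^{−2h/3} + 1/c)·e^{−c·ρ^{−2h/3}}. -/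

import Mathlib

/-!
For unit vectors `v, w`, `⟪(M(μ) - M(π)) v, w⟫ = ∫ f dμ - ∫ f dπ` with `f x = ⟪v, x⟫ ⟪w, x⟫`,
and `|f x| ≤ ‖x‖₂²`. Truncate at `‖x‖₂² = R`: below the cut `f` is bounded by `R`, so by the
layer-cake formula the two integrals differ by at most `2R · D_TV(μ, π)`; above the cut the
layer-cake formula and the exponential tail bound each integral by `C (R + 1/c) e^{-cR}`.
The choice `R = ρ^{-2h/3}` gives the bound.
-/

open Matrix MeasureTheory

/-- The spectral norm (largest singular value) of a real matrix, realized as the operator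
norm of the induced linear map between Euclidean spaces. -/
noncomputable def matrixSpectralNorm {m n : ℕ} (A : Matrix (Fin m) (Fin n) ℝ) : ℝ :=
  ‖LinearMap.toContinuousLinearMap (Matrix.toEuclideanLin A)‖

/-- Total variation distance `D_TV(μ, ν) = sup_{A measurable} |μ(A) − ν(A)|`. -/
noncomputable def tvDist {V : Type*} [MeasurableSpace V] (μ ν : Measure V) : ℝ :=
  ⨆ A : {s : Set V // MeasurableSet s}, |(μ A).toReal - (ν A).toReal|

/-- The second-moment matrix `M(μ) = ∫ x xᵀ dμ(x)`, defined entrywise. -/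
noncomputable def secondMoment {m : ℕ} (μ : Measure (Fin m → ℝ)) :
    Matrix (Fin m) (Fin m) ℝ :=
  Matrix.of fun i j => ∫ x, x i * x j ∂μ

open Set
open scoped InnerProductSpace

section TotalVariation

variable {V : Type*} [MeasurableSpace V] {μ ν : Measure V}
  [IsProbabilityMeasure μ] [IsProbabilityMeasure ν]

lemma measureReal_sub_le_tvDist {A : Set V} (hA : MeasurableSet A) :
    μ.real A - ν.real A ≤ tvDist μ ν := by
  have hbdd : BddAbove (range fun B : {s : Set V // MeasurableSet s} =>
      |μ.real B - ν.real B|) :=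
    ⟨1, forall_mem_range.2 fun B => abs_sub_le_of_nonneg_of_le measureReal_nonneg
      measureReal_le_one measureReal_nonneg measureReal_le_one⟩
  exact (le_abs_self _).trans (le_ciSup hbdd ⟨A, hA⟩)

lemma tvDist_nonneg : 0 ≤ tvDist μ ν := by
  simpa using measureReal_sub_le_tvDist (μ := μ) (ν := ν) MeasurableSet.empty

lemma integral_sub_integral_le_mul_tvDist {G : V → ℝ} (hGm : Measurable G) {L : ℝ}
    (hG0 : ∀ x, 0 ≤ G x) (hGL : ∀ x, G x ≤ L) :
    ∫ x, G x ∂μ - ∫ x, G x ∂ν ≤ L * tvDist μ ν := by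
  have hL : 0 ≤ L := by
    obtain ⟨x⟩ := nonempty_of_isProbabilityMeasure μ
    exact (hG0 x).trans (hGL x)
  have layercake (κ : Measure V) [IsProbabilityMeasure κ] :
      ∫ x, G x ∂κ = ∫ t in Ioc 0 L, κ.real {x | t ≤ G x} := by
    refine Integrable.integral_eq_integral_Ioc_meas_le ?_ (ae_of_all _ hG0) (ae_of_all _ hGL)
    exact (integrable_const L).mono' hGm.aestronglyMeasurable
      (ae_of_all _ fun x => (Real.norm_of_nonneg (hG0 x)).trans_le (hGL x))
  have level_integrable (κ : Measure V) [IsProbabilityMeasure κ] :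
      IntegrableOn (fun t => κ.real {x | t ≤ G x}) (Ioc 0 L) := by
    refine (AntitoneOn.integrableOn_isCompact isCompact_Icc ?_).mono_set Ioc_subset_Icc_self
    exact fun s _ t _ hst => measureReal_mono fun x hx => hst.trans hx
  calc ∫ x, G x ∂μ - ∫ x, G x ∂ν
      = ∫ t in Ioc 0 L, (μ.real {x | t ≤ G x} - ν.real {x | t ≤ G x}) := by
        rw [layercake μ, layercake ν, integral_sub (level_integrable μ) (level_integrable ν)]
    _ ≤ ∫ _ in Ioc 0 L, tvDist μ ν :=
        setIntegral_mono_on ((level_integrable μ).sub (level_integrable ν))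
          (integrableOn_const measure_Ioc_lt_top.ne) measurableSet_Ioc
          fun t _ => measureReal_sub_le_tvDist (hGm measurableSet_Ici)
    _ = L * tvDist μ ν := by simp [hL]

lemma integral_sub_integral_le_two_mul_tvDist {g : V → ℝ} (hgm : Measurable g) {M : ℝ}
    (hg : ∀ x, |g x| ≤ M) :
    ∫ x, g x ∂μ - ∫ x, g x ∂ν ≤ 2 * M * tvDist μ ν := by
  have integral_add_M (κ : Measure V) [IsProbabilityMeasure κ] :
      ∫ x, (g x + M) ∂κ = ∫ x, g x ∂κ + M := by
    have hgκ : Integrable g κ := (integrable_const M).mono' hgm.aestronglyMeasurable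
      (ae_of_all _ fun x => (Real.norm_eq_abs _).trans_le (hg x))
    simp [integral_add hgκ (integrable_const M)]
  have hshifted := integral_sub_integral_le_mul_tvDist (μ := μ) (ν := ν) (L := 2 * M)
    (hgm.add_const M) (fun x => by linarith [neg_abs_le (g x), hg x])
    (fun x => by linarith [le_abs_self (g x), hg x])
  rw [integral_add_M, integral_add_M] at hshifted
  linarith

end TotalVariation

section Tail

variable {V : Type*} [MeasurableSpace V]

lemma integral_indicator_le_of_exp_tail {ν : Measure V} {S : V → ℝ} (hSm : Measurable S)
    (hS0 : ∀ x, 0 ≤ S x) {C c R : ℝ} (hC : 0 ≤ C) (hc : 0 < c) (hR : 0 ≤ R)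
    (htail : ∀ s, 0 < s → ν {x | s < S x} ≤ ENNReal.ofReal (C * Real.exp (-c * s))) :
    ∫ x, {x | R < S x}.indicator S x ∂ν ≤ C * (R + 1 / c) * Real.exp (-c * R) := by
  set q := {x | R < S x}.indicator S
  have hq0 : ∀ x, 0 ≤ q x := indicator_nonneg fun x _ => hS0 x
  have hqm : Measurable q := hSm.indicator (measurableSet_lt measurable_const hSm)
  -- `t < q x` with `t > 0` forces `R < S x` and `q x = S x`.
  have level (t : ℝ) (ht : 0 < t) : ν {x | t < q x} ≤ ν {x | max t R < S x} := by
    refine measure_mono fun x hx => ?_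
    by_cases hxR : R < S x
    · simp_all [q]
    · simp_all [q, ht.not_gt]
  have bulk : ∫⁻ t in Ioc 0 R, ν {x | t < q x} ≤
      ENNReal.ofReal (C * Real.exp (-c * R)) * ENNReal.ofReal R := by
    calc ∫⁻ t in Ioc 0 R, ν {x | t < q x}
        ≤ ∫⁻ _ in Ioc 0 R, ENNReal.ofReal (C * Real.exp (-c * R)) := by
          refine setLIntegral_mono' measurableSet_Ioc fun t ht => ?_
          have hlevel := level t ht.1
          rw [max_eq_right ht.2] at hlevel
          exact hlevel.trans (htail R (ht.1.trans_le ht.2))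
      _ = _ := by rw [setLIntegral_const, Real.volume_Ioc, sub_zero]
  have tail : ∫⁻ t in Ioi R, ν {x | t < q x} ≤ ENNReal.ofReal (C * (Real.exp (-c * R) / c)) := by
    calc ∫⁻ t in Ioi R, ν {x | t < q x}
        ≤ ∫⁻ t in Ioi R, ENNReal.ofReal (C * Real.exp (-c * t)) := by
          refine setLIntegral_mono' measurableSet_Ioi fun t ht => ?_
          have hlevel := level t (hR.trans_lt ht)
          rw [max_eq_left (le_of_lt ht)] at hlevel
          exact hlevel.trans (htail t (hR.trans_lt ht))
      _ = ENNReal.ofReal (∫ t in Ioi R, C * Real.exp (-c * t)) :=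
          (ofReal_integral_eq_lintegral_ofReal ((exp_neg_integrableOn_Ioi R hc).const_mul C)
            (ae_of_all _ fun t => by positivity)).symm
      _ = _ := by
          rw [integral_const_mul, integral_exp_mul_Ioi (by linarith)]
          ring_nf
  have hlint : ∫⁻ x, ENNReal.ofReal (q x) ∂ν ≤
      ENNReal.ofReal (C * (R + 1 / c) * Real.exp (-c * R)) := by
    rw [lintegral_eq_lintegral_meas_lt ν (ae_of_all _ hq0) hqm.aemeasurable,
      ← Ioc_union_Ioi_eq_Ioi hR, lintegral_union measurableSet_Ioi Ioc_disjoint_Ioi_same]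
    refine (add_le_add bulk tail).trans (le_of_eq ?_)
    rw [← ENNReal.ofReal_mul (by positivity), ← ENNReal.ofReal_add (by positivity) (by positivity)]
    ring_nf
  rw [integral_eq_lintegral_of_nonneg_ae (ae_of_all _ hq0) hqm.aestronglyMeasurable]
  exact ENNReal.toReal_le_of_le_ofReal (by positivity) hlint

end Tail

section Truncation

variable {V : Type*} [MeasurableSpace V] {μ ν : Measure V}
  [IsProbabilityMeasure μ] [IsProbabilityMeasure ν]

theorem integral_sub_integral_le_of_abs_le_mul {S f : V → ℝ} (hSm : Measurable S)
    (hS0 : ∀ x, 0 ≤ S x) (hSμ : Integrable S μ) (hSν : Integrable S ν) (hfm : Measurable f)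
    {N : ℝ} (hN : 0 ≤ N) (hf : ∀ x, |f x| ≤ N * S x) {C c R : ℝ} (hC : 0 ≤ C) (hc : 0 < c)
    (hR : 0 ≤ R)
    (htailμ : ∀ s, 0 < s → μ {x | s < S x} ≤ ENNReal.ofReal (C * Real.exp (-c * s)))
    (htailν : ∀ s, 0 < s → ν {x | s < S x} ≤ ENNReal.ofReal (C * Real.exp (-c * s))) :
    ∫ x, f x ∂μ - ∫ x, f x ∂ν ≤
      N * (2 * R * tvDist μ ν + 2 * C * (R + 1 / c) * Real.exp (-c * R)) := by
  set T := {x | R < S x}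
  have hT : MeasurableSet T := measurableSet_lt measurable_const hSm
  have hfS : ∀ {κ : Measure V}, Integrable S κ → Integrable f κ := fun hSκ =>
    (hSκ.const_mul N).mono' hfm.aestronglyMeasurable
      (ae_of_all _ fun x => (Real.norm_eq_abs _).trans_le (hf x))
  have split : ∀ {κ : Measure V}, Integrable S κ →
      ∫ x, f x ∂κ = ∫ x, Tᶜ.indicator f x ∂κ + ∫ x, T.indicator f x ∂κ := fun hSκ => by
    rw [integral_indicator hT.compl, integral_indicator hT, add_comm,
      integral_add_compl hT (hfS hSκ)]
  have bulk : ∫ x, Tᶜ.indicator f x ∂μ - ∫ x, Tᶜ.indicator f x ∂ν ≤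
      2 * (N * R) * tvDist μ ν := by
    refine integral_sub_integral_le_two_mul_tvDist (hfm.indicator hT.compl) fun x => ?_
    by_cases hx : x ∈ T
    · simpa [hx] using mul_nonneg hN hR
    · rw [indicator_of_mem hx]
      exact (hf x).trans (by gcongr; simpa [T] using hx)
  have tail : ∀ {κ : Measure V}, Integrable S κ →
      (∀ s, 0 < s → κ {x | s < S x} ≤ ENNReal.ofReal (C * Real.exp (-c * s))) →
      |∫ x, T.indicator f x ∂κ| ≤ N * (C * (R + 1 / c) * Real.exp (-c * R)) := by
    intro κ hSκ htail
    calc |∫ x, T.indicator f x ∂κ| ≤ ∫ x, N * T.indicator S x ∂κ := by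
          refine abs_integral_le_integral_abs.trans (integral_mono ((hfS hSκ).indicator hT).abs
            ((hSκ.indicator hT).const_mul N) fun x => ?_)
          by_cases hx : x ∈ T <;> simp [hx, hf x]
      _ ≤ N * (C * (R + 1 / c) * Real.exp (-c * R)) := by
          rw [integral_const_mul]
          exact mul_le_mul_of_nonneg_left
            (integral_indicator_le_of_exp_tail hSm hS0 hC hc hR htail) hN
  rw [split hSμ, split hSν]
  linarith [abs_le.mp (tail hSμ htailμ), abs_le.mp (tail hSν htailν)]

end Truncation

section SecondMoment

variable {m : ℕ}

lemma integrable_mul_apply {ν : Measure (Fin m → ℝ)}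
    (hν : Integrable (fun x => ∑ i, x i ^ 2) ν) (i j : Fin m) :
    Integrable (fun x => x i * x j) ν := by
  refine hν.mono' (by fun_prop) (ae_of_all _ fun x => ?_)
  have hi := Finset.single_le_sum (fun k _ => sq_nonneg (x k)) (Finset.mem_univ i)
  have hj := Finset.single_le_sum (fun k _ => sq_nonneg (x k)) (Finset.mem_univ j)
  rw [Real.norm_eq_abs, abs_mul]
  nlinarith [sq_nonneg (|x i| - |x j|), sq_abs (x i), sq_abs (x j)]

lemma inner_toEuclideanLin_secondMoment {ν : Measure (Fin m → ℝ)}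
    (hν : Integrable (fun x => ∑ i, x i ^ 2) ν) (v w : EuclideanSpace ℝ (Fin m)) :
    ⟪toEuclideanLin (secondMoment ν) v, w⟫_ℝ =
      ∫ x, ⟪v, WithLp.toLp 2 x⟫_ℝ * ⟪w, WithLp.toLp 2 x⟫_ℝ ∂ν := by
  have expand (x : Fin m → ℝ) : ⟪v, WithLp.toLp 2 x⟫_ℝ * ⟪w, WithLp.toLp 2 x⟫_ℝ =
      ∑ i, ∑ j, w i * v j * (x i * x j) := by
    rw [mul_comm, PiLp.inner_apply, PiLp.inner_apply, Finset.sum_mul_sum]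
    simp only [RCLike.inner_apply, conj_trivial]
    refine Finset.sum_congr rfl fun i _ => Finset.sum_congr rfl fun j _ => by ring
  simp_rw [expand]
  rw [integral_finsetSum _ fun i _ => integrable_finsetSum _ fun j _ =>
    (integrable_mul_apply hν i j).const_mul _]
  simp_rw [integral_finsetSum _ fun j _ => (integrable_mul_apply hν _ j).const_mul _,
    integral_const_mul]
  simp only [PiLp.inner_apply, RCLike.inner_apply, conj_trivial, toLpLin_apply, secondMoment,
    mulVec, dotProduct, of_apply, Finset.mul_sum]
  refine Finset.sum_congr rfl fun i _ => Finset.sum_congr rfl fun j _ => by ring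

end SecondMoment

lemma abs_real_inner_mul_inner_le {E : Type*} [NormedAddCommGroup E] [InnerProductSpace ℝ E]
    (v w x : E) : |⟪v, x⟫_ℝ * ⟪w, x⟫_ℝ| ≤ ‖v‖ * ‖w‖ * ‖x‖ ^ 2 := by
  rw [abs_mul]
  calc |⟪v, x⟫_ℝ| * |⟪w, x⟫_ℝ| ≤ (‖v‖ * ‖x‖) * (‖w‖ * ‖x‖) :=
        mul_le_mul (abs_real_inner_le_norm v x) (abs_real_inner_le_norm w x) (abs_nonneg _)
          (by positivity)
    _ = ‖v‖ * ‖w‖ * ‖x‖ ^ 2 := by ring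

theorem secondMoment_bias_geometric_ergodic_general (m : ℕ) (μ π : Measure (Fin m → ℝ))
    [IsProbabilityMeasure μ] [IsProbabilityMeasure π]
    (hμ : Integrable (fun x => ∑ i, (x i) ^ 2) μ)
    (hπ : Integrable (fun x => ∑ i, (x i) ^ 2) π)
    (K ρ : ℝ) (h : ℝ) (hρ : ρ ∈ Set.Ioo (0 : ℝ) 1)
    (htv : tvDist μ π ≤ K * ρ ^ h)
    (C c : ℝ) (hC : 0 < C) (hc : 0 < c)
    (htailμ : ∀ s : ℝ, 0 < s →
      μ {x : Fin m → ℝ | s < ∑ i, (x i) ^ 2} ≤ ENNReal.ofReal (C * Real.exp (-c * s)))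
    (htailπ : ∀ s : ℝ, 0 < s →
      π {x : Fin m → ℝ | s < ∑ i, (x i) ^ 2} ≤ ENNReal.ofReal (C * Real.exp (-c * s))) :
    matrixSpectralNorm (secondMoment μ - secondMoment π) ≤
      2 * K * ρ ^ (h / 3)
        + 2 * C * (ρ ^ (-(2 * h / 3)) + 1 / c) * Real.exp (-c * ρ ^ (-(2 * h / 3))) := by
  -- Truncating at `‖x‖₂² = R := ρ^{-2h/3}` balances `R · D_TV ≤ K ρ^{h/3}` against the tail.
  set R := ρ ^ (-(2 * h / 3))
  have hR : 0 < R := Real.rpow_pos_of_pos hρ.1 _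
  have hRtv : 2 * R * tvDist μ π ≤ 2 * K * ρ ^ (h / 3) := calc
    2 * R * tvDist μ π ≤ 2 * R * (K * ρ ^ h) := by gcongr
    _ = 2 * K * ρ ^ (h / 3) := by
      have hexp : R * ρ ^ h = ρ ^ (h / 3) := by rw [← Real.rpow_add hρ.1]; ring_nf
      linear_combination 2 * K * hexp
  set D := 2 * R * tvDist μ π + 2 * C * (R + 1 / c) * Real.exp (-c * R)
  have hD : 0 ≤ D := by have := tvDist_nonneg (μ := μ) (ν := π); positivity
  refine ContinuousLinearMap.opNorm_le_of_re_inner_le (hD.trans (by linarith))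
    fun v w hv hw => ?_
  have hquad (x : Fin m → ℝ) :
      |⟪v, WithLp.toLp 2 x⟫_ℝ * ⟪w, WithLp.toLp 2 x⟫_ℝ| ≤ 1 * ∑ i, x i ^ 2 := by
    simpa [hv, hw, EuclideanSpace.real_norm_sq_eq] using abs_real_inner_mul_inner_le v w _
  calc _ = ∫ x, ⟪v, WithLp.toLp 2 x⟫_ℝ * ⟪w, WithLp.toLp 2 x⟫_ℝ ∂μ
        - ∫ x, ⟪v, WithLp.toLp 2 x⟫_ℝ * ⟪w, WithLp.toLp 2 x⟫_ℝ ∂π := by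
        simp [inner_sub_left, inner_toEuclideanLin_secondMoment hμ,
          inner_toEuclideanLin_secondMoment hπ]
    _ ≤ 1 * D := integral_sub_integral_le_of_abs_le_mul (by fun_prop) (fun x => by positivity)
        hμ hπ (by fun_prop) zero_le_one hquad hC.le hc hR.le htailμ htailπ
    _ ≤ _ := by linarith

/-- The explicit-constant, zero-mean form of Lemma 2.4 of the paper: if
`D_TV(μ, π) ≤ K ρ^h` and both measures have sub-Gaussian tails
`μ(‖x‖₂² > s) ≤ C e^{−c s}`, then the spectral-norm bias of the second-moment matrices
satisfies `‖M(μ) − M(π)‖₂ ≤ 2K ρ^{h/3} + 2C(ρ^{−2h/3} + 1/c) e^{−c ρ^{−2h/3}}`. -/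
theorem secondMoment_bias_geometric_ergodic (m : ℕ) (μ π : Measure (Fin m → ℝ))
    [IsProbabilityMeasure μ] [IsProbabilityMeasure π]
    (hμ : Integrable (fun x => ∑ i, (x i) ^ 2) μ)
    (hπ : Integrable (fun x => ∑ i, (x i) ^ 2) π)
    (K ρ : ℝ) (h : ℝ) (hK : 0 < K) (hρ : ρ ∈ Set.Ioo (0 : ℝ) 1) (hh : 0 ≤ h)
    (htv : tvDist μ π ≤ K * ρ ^ h)
    (C c : ℝ) (hC : 0 < C) (hc : 0 < c)
    (htailμ : ∀ s : ℝ, 0 < s →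
      μ {x : Fin m → ℝ | s < ∑ i, (x i) ^ 2} ≤ ENNReal.ofReal (C * Real.exp (-c * s)))
    (htailπ : ∀ s : ℝ, 0 < s →
      π {x : Fin m → ℝ | s < ∑ i, (x i) ^ 2} ≤ ENNReal.ofReal (C * Real.exp (-c * s))) :
    matrixSpectralNorm (secondMoment μ - secondMoment π) ≤
      2 * K * ρ ^ (h / 3)
        + 2 * C * (ρ ^ (-(2 * h / 3)) + 1 / c) * Real.exp (-c * ρ ^ (-(2 * h / 3))) :=
  secondMoment_bias_geometric_ergodic_general m μ π hμ hπ K ρ h hρ htv C c hC hc htailμ htailπ
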